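/- arXiv:1012.1802 — 5 statements merged into one kernel-verified Lean document; each statement's English description precedes it below -/
import Mathlib

section
/- Given a set A of monotonic equality analyses, normal forms under the induced rewrite relation are unique: if ir2 and ir3 are both normal forms of ir1 (reachable by the reflexive transitive closure of single analysis steps, with no further strict steps possible), then ir2 = ir3. -/
/-- An IR is a pair of a set of nodes and a set of equalities; `IRle` is the
information order: subset of nodes and subset of equalities. -/
def IRle {α β : Type} (x y : Set α × Set β) : Prop := x.1 ⊆ y.1 ∧ x.2 ⊆ y.2

theorem IRle_trans {α β : Type} {x y z : Set α × Set β}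
    (h1 : IRle x y) (h2 : IRle y z) : IRle x z :=
  ⟨h1.1.trans h2.1, h1.2.trans h2.2⟩

/-- If `x ≤ n`, `n` is a normal form, and `x →* y`, then `y ≤ n`. -/
theorem key_lemma {α β : Type}
    (A : Set ((Set α × Set β) → (Set α × Set β) → Prop))
    (hmono : ∀ a ∈ A, ∀ x y x', IRle x y → a x x' →
      ∃ y', a y y' ∧ IRle x' y')
    (n : Set α × Set β)
    (hnf : ∀ z, ¬ (∃ a ∈ A, a n z ∧ n ≠ z))
    {x y : Set α × Set β} (hxn : IRle x n)
    (h : Relation.ReflTransGen (fun x y => ∃ a ∈ A, a x y ∧ x ≠ y) x y) :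
    IRle y n := by
  induction h with
  | refl => exact hxn
  | tail _ hbc ih =>
    obtain ⟨a, haA, hab, _⟩ := hbc
    obtain ⟨y', hay', hle⟩ := hmono a haA _ _ _ ih hab
    have : n = y' := by
      by_contra hne
      exact hnf y' ⟨a, haA, hay', hne⟩
    exact this ▸ hle

theorem le_of_rtg {α β : Type}
    (A : Set ((Set α × Set β) → (Set α × Set β) → Prop))
    (hstep : ∀ a ∈ A, ∀ x y, a x y → IRle x y)
    {x y : Set α × Set β}
    (h : Relation.ReflTransGen (fun x y => ∃ a ∈ A, a x y ∧ x ≠ y) x y) :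
    IRle x y := by
  induction h with
  | refl => exact ⟨subset_rfl, subset_rfl⟩
  | tail _ hbc ih =>
    obtain ⟨a, haA, hab, _⟩ := hbc
    exact IRle_trans ih (hstep a haA _ _ hab)

/-- Given a set `A` of monotonic equality analyses (each of which only adds
information), normal forms under the induced rewrite relation are unique. -/
theorem monotone_analyses_unique_normal_form {α β : Type}
    (A : Set ((Set α × Set β) → (Set α × Set β) → Prop))
    (hstep : ∀ a ∈ A, ∀ x y, a x y → IRle x y)
    (hmono : ∀ a ∈ A, ∀ x y x', IRle x y → a x x' →
      ∃ y', a y y' ∧ IRle x' y')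
    (ir1 ir2 ir3 : Set α × Set β)
    (h2 : Relation.ReflTransGen (fun x y => ∃ a ∈ A, a x y ∧ x ≠ y) ir1 ir2)
    (h2nf : ∀ z, ¬ (∃ a ∈ A, a ir2 z ∧ ir2 ≠ z))
    (h3 : Relation.ReflTransGen (fun x y => ∃ a ∈ A, a x y ∧ x ≠ y) ir1 ir3)
    (h3nf : ∀ z, ¬ (∃ a ∈ A, a ir3 z ∧ ir3 ≠ z)) :
    ir2 = ir3 := by
  -- ir1 ≤ ir3 and ir1 ≤ ir2
  have hle13 : IRle ir1 ir3 := le_of_rtg A hstep h3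
  have hle12 : IRle ir1 ir2 := le_of_rtg A hstep h2
  have h23 : IRle ir2 ir3 := key_lemma A hmono ir3 h3nf hle13 h2
  have h32 : IRle ir3 ir2 := key_lemma A hmono ir2 h2nf hle12 h3
  exact Prod.ext (subset_antisymm h23.1 h32.1) (subset_antisymm h23.2 h32.2)
end

section
/- pass_ℓ(θ_ℓ(falsẽ, A)) = pass_ℓ(A) + 1, in the pointwise ⊥-lifted sense: for all i, if pass_ℓ(A)(i) = n ∈ ℕ then pass_ℓ(θ_ℓ(falsẽ, A))(i) = n + 1, and if pass_ℓ(A)(i) = ⊥ then pass_ℓ(θ_ℓ(falsẽ, A))(i) = ⊥. -/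
open Classical

noncomputable section

abbrev Idx (L : Type) := L → ℕ
abbrev Val (L τ : Type) := Idx L → Option τ

variable {L τ : Type} [DecidableEq L]

/-- Update a loop-iteration index at loop `ℓ` to `k`. -/
def upd (i : Idx L) (ℓ : L) (k : ℕ) : Idx L := Function.update i ℓ k

/-- The θ (loop sequence) operator. -/
def theta (ℓ : L) (base loopv : Val L τ) : Val L τ :=
  fun i => if i ℓ = 0 then base i else loopv (upd i ℓ (i ℓ - 1))

/-- monotonize: once undefined in loop `ℓ`, stays undefined. -/
def monotonize (ℓ : L) (v : Val L τ) : Val L τ :=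
  fun i => if ∃ j < i ℓ, v (upd i ℓ j) = none then none else v i

/-- The eval operator. -/
def evalP (ℓ : L) (loopv : Val L τ) (idx : Val L ℕ) : Val L τ :=
  fun i => match idx i with
    | none => none
    | some n => monotonize ℓ loopv (upd i ℓ n)

/-- The pass operator. -/
def passP (ℓ : L) (cond : Val L Bool) : Val L ℕ :=
  fun i => if h : ∃ k, monotonize ℓ cond (upd i ℓ k) = some true
           then some (Nat.find h) else none

/-- The φ (gated choice) operator. -/
def phi (cond : Val L Bool) (t f : Val L τ) : Val L τ :=
  fun i => match cond i with
    | none => none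
    | some true => t i
    | some false => f i

lemma upd_upd (i : Idx L) (ℓ : L) (k j : ℕ) : upd (upd i ℓ k) ℓ j = upd i ℓ j := by
  simp [upd, Function.update_idem]

lemma upd_self (i : Idx L) (ℓ : L) (k : ℕ) : upd i ℓ k ℓ = k := by
  simp [upd]

lemma mono_theta_zero (ℓ : L) (A : Val L Bool) (i : Idx L) :
    monotonize ℓ (theta ℓ (fun _ => some false) A) (upd i ℓ 0) = some false := by
  simp [monotonize, theta, upd_self, upd_upd]

lemma mono_theta_succ (ℓ : L) (A : Val L Bool) (i : Idx L) (k : ℕ) :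
    monotonize ℓ (theta ℓ (fun _ => some false) A) (upd i ℓ (k+1))
      = monotonize ℓ A (upd i ℓ k) := by
  have hcond : (∃ j < (upd i ℓ (k+1)) ℓ,
      theta ℓ (fun _ => some false) A (upd (upd i ℓ (k+1)) ℓ j) = none)
      ↔ (∃ j < (upd i ℓ k) ℓ, A (upd (upd i ℓ k) ℓ j) = none) := by
    simp only [upd_self, upd_upd]
    constructor
    · rintro ⟨j, hj, hth⟩
      unfold theta at hth
      rcases Nat.eq_zero_or_pos j with h0 | hpos
      · simp [h0, upd_self] at hth
      · refine ⟨j - 1, by omega, ?_⟩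
        rw [if_neg (by simp [upd_self]; omega), upd_upd] at hth
        simpa [upd_self] using hth
    · rintro ⟨j, hj, hA⟩
      refine ⟨j + 1, by omega, ?_⟩
      unfold theta
      rw [if_neg (by simp [upd_self]), upd_upd]
      simpa [upd_self] using hA
  unfold monotonize
  by_cases h : ∃ j < (upd i ℓ k) ℓ, A (upd (upd i ℓ k) ℓ j) = none
  · rw [if_pos (hcond.mpr h), if_pos h]
  · rw [if_neg (fun hh => h (hcond.mp hh)), if_neg h]
    unfold theta
    rw [if_neg (by simp [upd_self]), upd_self]
    simp [upd_upd]

/-- pass_ℓ(θ_ℓ(falsẽ, A)) = pass_ℓ(A) + 1, in the pointwise ⊥-lifted sense. -/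
theorem pass_theta_false (ℓ : L) (A : Val L Bool) :
    ∀ i : Idx L,
      (∀ n : ℕ, passP ℓ A i = some n →
        passP ℓ (theta ℓ (fun _ => some false) A) i = some (n + 1)) ∧
      (passP ℓ A i = none →
        passP ℓ (theta ℓ (fun _ => some false) A) i = none) := by
  intro i
  constructor
  · intro n hn
    unfold passP at hn ⊢
    split_ifs at hn with h
    · have hn' : Nat.find h = n := by simpa using hn
      have hwit : monotonize ℓ (theta ℓ (fun _ => some false) A) (upd i ℓ (n+1)) = some true := by
        rw [mono_theta_succ]
        rw [← hn']; exact Nat.find_spec h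
      have h2 : ∃ k, monotonize ℓ (theta ℓ (fun _ => some false) A) (upd i ℓ k) = some true :=
        ⟨n+1, hwit⟩
      rw [dif_pos h2]
      congr 1
      refine le_antisymm (Nat.find_le hwit) ?_
      by_contra hlt
      push_neg at hlt
      have hspec := Nat.find_spec h2
      rcases Nat.eq_zero_or_pos (Nat.find h2) with h0 | hpos
      · rw [h0, mono_theta_zero] at hspec; simp at hspec
      · obtain ⟨m, hm⟩ := Nat.exists_eq_succ_of_ne_zero (by omega : Nat.find h2 ≠ 0)
        rw [hm, mono_theta_succ] at hspec
        exact Nat.find_min h (by omega : m < Nat.find h) hspec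
  · intro hn
    unfold passP at hn ⊢
    split_ifs at hn with h
    rw [dif_neg]
    rintro ⟨k, hk⟩
    rcases Nat.eq_zero_or_pos k with h0 | hpos
    · rw [h0, mono_theta_zero] at hk; simp at hk
    · obtain ⟨m, hm⟩ := Nat.exists_eq_succ_of_ne_zero (by omega : k ≠ 0)
      rw [hm, mono_theta_succ] at hk
      exact h ⟨m, hk⟩
end
end

section
/- The loop-peeling axiom for eval/θ: eval_ℓ(θ_ℓ(A, B), S(C)) = eval_ℓ(B, C), where S(C) is the pointwise ⊥-lifted successor of C, provided A is everywhere non-⊥ (total). That is, evaluating a θ-sequence at index n+1 equals evaluating its iterative child (re-indexed) at index n. -/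
open Classical

noncomputable section

variable {L τ : Type} [DecidableEq L]

/-- Loop peeling: eval_ℓ(θ_ℓ(A, B), S(C)) = eval_ℓ(B, C), provided A is total. -/
theorem eval_theta_succ (ℓ : L) (A B : Val L τ) (C : Val L ℕ)
    (hA : ∀ i, A i ≠ none) :
    ∀ i, evalP ℓ (theta ℓ A B) (fun j => (C j).map (· + 1)) i
       = evalP ℓ B C i := by
  intro i
  unfold evalP
  cases hC : C i with
  | none => simp [hC]
  | some n =>
    simp only [hC, Option.map_some]
    have hupd : ∀ a b : ℕ, upd (upd i ℓ a) ℓ b = upd i ℓ b := by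
      intro a b; simp [upd, Function.update_idem]
    have hval : ∀ k : ℕ, (upd i ℓ k) ℓ = k := by
      intro k; simp [upd]
    have htheta : ∀ j : ℕ, theta ℓ A B (upd i ℓ (j+1)) = B (upd i ℓ j) := by
      intro j
      simp [theta, hval, hupd]
    have hex : (∃ j < (upd i ℓ (n+1)) ℓ, theta ℓ A B (upd (upd i ℓ (n+1)) ℓ j) = none)
        ↔ (∃ j < (upd i ℓ n) ℓ, B (upd (upd i ℓ n) ℓ j) = none) := by
      simp only [hval, hupd]
      constructor
      · rintro ⟨j, hj, hnone⟩
        cases j with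
        | zero => exact absurd hnone (by simpa [theta, hval] using hA (upd i ℓ 0))
        | succ m =>
          exact ⟨m, by omega, by rwa [htheta] at hnone⟩
      · rintro ⟨j, hj, hnone⟩
        exact ⟨j+1, by omega, by rwa [htheta]⟩
    unfold monotonize
    rw [if_congr hex rfl rfl]
    split
    · rfl
    · exact htheta n
end
end

section
/- Counting loop identity: let id_ℓ be the unique sequence satisfying id_ℓ = θ_ℓ(0̃, 1 +̃ id_ℓ) (so id_ℓ(i) = i(ℓ) for all i). Then for any total sequence n of natural numbers that is invariant in ℓ (n(i[ℓ↦k]) = n(i) for all k), eval_ℓ(id_ℓ, pass_ℓ(id_ℓ ≥̃ n)) = n, where ≥̃ and +̃ are the pointwise ⊥-lifted comparison and addition. -/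
open Classical

noncomputable section

variable {L τ : Type} [DecidableEq L]

/-- Counting loop identity: if id_ℓ = θ_ℓ(0̃, 1 +̃ id_ℓ) and n is total and
ℓ-invariant, then eval_ℓ(id_ℓ, pass_ℓ(id_ℓ ≥̃ n)) = n. -/
theorem counting_loop (ℓ : L) (x n : Val L ℕ)
    (hx : ∀ i, x i = theta ℓ (fun _ => some 0) (fun j => (x j).map (1 + ·)) i)
    (hn_total : ∀ i, n i ≠ none)
    (hn_inv : ∀ i k, n (upd i ℓ k) = n i) :
    ∀ i, evalP ℓ x
        (passP ℓ (fun j => (x j).bind (fun a => (n j).map (fun b => decide (b ≤ a))))) i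
      = n i := by
  -- First: x i = some (i ℓ)
  have hid : ∀ m : ℕ, ∀ i : Idx L, i ℓ = m → x i = some (i ℓ) := by
    intro m
    induction m with
    | zero => intro i h; rw [hx i]; simp [theta, h]
    | succ k ih =>
      intro i h
      rw [hx i]
      simp only [theta, h]
      rw [show k + 1 - 1 = k from rfl, ih (upd i ℓ k) (by simp [upd])]
      simp [upd, Nat.add_comm]
  have hid' : ∀ i : Idx L, x i = some (i ℓ) := fun i => hid (i ℓ) i rfl
  intro i
  obtain ⟨m, hm⟩ : ∃ m, n i = some m := Option.ne_none_iff_exists'.mp (hn_total i)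
  set cond : Val L Bool := fun j => (x j).bind (fun a => (n j).map (fun b => decide (b ≤ a))) with hcond
  have hcondval : ∀ k, cond (upd i ℓ k) = some (decide (m ≤ k)) := by
    intro k
    simp only [hcond, hid', Option.bind_some,
      show n (upd i ℓ k) = some m from (hn_inv i k).trans hm, Option.map_some]
    simp [upd]
  have hmono : ∀ k, monotonize ℓ cond (upd i ℓ k) = some (decide (m ≤ k)) := by
    intro k
    have : ¬ ∃ j < (upd i ℓ k) ℓ, cond (upd (upd i ℓ k) ℓ j) = none := by
      push_neg
      intro j _
      rw [show upd (upd i ℓ k) ℓ j = upd i ℓ j from by simp [upd, Function.update_idem]]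
      rw [hcondval j]; simp
    simp [monotonize, this, hcondval k]
  have hex : ∃ k, monotonize ℓ cond (upd i ℓ k) = some true := by
    exact ⟨m, by rw [hmono]; simp⟩
  have hfind : Nat.find hex = m := by
    apply le_antisymm
    · exact Nat.find_le (by rw [hmono]; simp)
    · refine (Nat.le_find_iff hex m).mpr ?_
      intro j hj
      rw [hmono]
      simp
      omega
  simp only [evalP, passP, hcond] at *
  rw [dif_pos hex, hfind]
  have hxmono : monotonize ℓ x (upd i ℓ m) = some m := by
    have : ¬ ∃ j < (upd i ℓ m) ℓ, x (upd (upd i ℓ m) ℓ j) = none := by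
      push_neg; intro j _; rw [hid']; simp
    simp [monotonize, this, hid', upd]
  rw [hm]
  exact hxmono
end
end

section
/- Loop-induction-variable strength reduction is semantically valid: let m be an ℓ-invariant total sequence, and let x be the unique solution of x = θ_ℓ(A, B(x)) where B is a function on sequences; define y as the unique solution of y = θ_ℓ(A *̃ m, B'(y)) where the iterative children satisfy B(x) *̃ m = B'(x *̃ m) pointwise for all sequences x. Then x *̃ m = y, where *̃ is the pointwise ⊥-lifted multiplication. -/
open Classical

noncomputable section

variable {L τ : Type} [DecidableEq L]

/-- Pointwise ⊥-lifted multiplication. -/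
def mulL (a b : Val L ℤ) : Val L ℤ :=
  fun i => (a i).bind (fun x => (b i).map (fun y => x * y))

/-- Loop-induction-variable strength reduction is semantically valid. -/
theorem strength_reduction (ℓ : L) (A m : Val L ℤ)
    (B B' : Val L ℤ → Val L ℤ) (x y : Val L ℤ)
    (hm_inv : ∀ i k, m (upd i ℓ k) = m i)
    (hm_tot : ∀ i, m i ≠ none)
    (hx : ∀ i, x i = theta ℓ A (B x) i)
    (hxu : ∀ z : Val L ℤ, (∀ i, z i = theta ℓ A (B z) i) → z = x)
    (hy : ∀ i, y i = theta ℓ (mulL A m) (B' y) i)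
    (hyu : ∀ z : Val L ℤ, (∀ i, z i = theta ℓ (mulL A m) (B' z) i) → z = y)
    (hcomm : ∀ (z : Val L ℤ) (i : Idx L), mulL (B z) m i = B' (mulL z m) i) :
    mulL x m = y := by
  apply hyu
  intro i
  rw [show (mulL x m) i = (x i).bind (fun a => (m i).map (a * ·)) from rfl, hx i]
  unfold theta
  by_cases h : i ℓ = 0
  · simp [h]; rfl
  · simp only [h, if_neg h]
    rw [← hcomm x]
    simp [mulL, hm_inv]
end
end
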